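/- arXiv:2408.08833 — 2 statements merged into one kernel-verified Lean document; each statement's English description precedes it below -/
import Mathlib

section
/- Let M ≥ 2, h₁, h₂ ∈ ℂ^M, let σ_s², σ_n² > 0 be real, and let k ≥ 1 be real. Define R₁ = (1 − 1/k)·σ_s²·h₁·h₁ᴴ + (1/k)·σ_s²·(h₁+h₂)·(h₁+h₂)ᴴ + σ_n²·I_M. Then det(R₁) = (σ_n²)^(M−2)·[ (σ_s²‖h₁‖² + σ_n²)·((1/k − 1/k²)·σ_s²‖h₂‖² + σ_n²) + (1/k²)·σ_s²·σ_n²·‖h₂‖² + (1/k)·σ_s²·σ_n²·(h₁ᴴh₂ + h₂ᴴh₁) − ((k−1)/k²)·σ_s⁴·|h₂ᴴh₁|² ]. -/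
/-!
`R₁ - σ_n² I` is a sum of two rank-one matrices, i.e. a product `U V` with `U` of size `M × 2`
and `V` of size `2 × M`. Sylvester's identity `det (c I_M + U V) = c ^ (M - 2) det (c I_2 + V U)`,
obtained by evaluating `X ^ 2 χ_{UV} = X ^ M χ_{VU}` (so no invertibility of `c` is needed),
reduces the determinant to a `2 × 2` one whose entries are inner products of `h₁` and `h₁ + h₂`.
Expanding these bilinearly, with `|h₂ᴴh₁|² = (h₁ᴴh₂)(h₂ᴴh₁)` and `(k - 1)/k² = 1/k - 1/k²`,
gives the formula.
-/

open Matrix Complex BigOperators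
open scoped ComplexConjugate

namespace Matrix

variable {m n R : Type*} [CommRing R]

theorem det_smul_one_add_mul_of_card_le [Fintype m] [Fintype n] [DecidableEq m] [DecidableEq n]
    (c : R) (U : Matrix m n R) (V : Matrix n m R) (h : Fintype.card n ≤ Fintype.card m) :
    det (c • 1 + U * V) = c ^ (Fintype.card m - Fintype.card n) * det (c • 1 + V * U) := by
  have := congrArg (Polynomial.eval c) (charpoly_mul_comm_of_le (-U) V h)
  simpa only [Polynomial.eval_mul, Polynomial.eval_pow, Polynomial.eval_X, eval_charpoly,
    scalar_apply, ← smul_one_eq_diagonal, Matrix.neg_mul, Matrix.mul_neg, sub_neg_eq_add] using this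

theorem smul_vecMulVec_add_smul_vecMulVec (a b : R) (x y u v : m → R) :
    a • vecMulVec x u + b • vecMulVec y v = (of ![a • x, b • y])ᵀ * of ![u, v] := by
  ext i j
  simp [mul_apply, Fin.sum_univ_two, vecMulVec_apply, mul_assoc]

theorem of_mul_transpose_of_fin_two [Fintype m] (a b : R) (x y u v : m → R) :
    of ![u, v] * (of ![a • x, b • y])ᵀ =
      !![a * (u ⬝ᵥ x), b * (u ⬝ᵥ y); a * (v ⬝ᵥ x), b * (v ⬝ᵥ y)] := by
  ext i j
  fin_cases i <;> fin_cases j <;> simp [mul_apply, dotProduct, Finset.mul_sum, mul_left_comm]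

theorem det_smul_vecMulVec_add_smul_vecMulVec_add_smul_one [Fintype m] [DecidableEq m]
    (a b c : R) (x y u v : m → R) (hm : 2 ≤ Fintype.card m) :
    det (a • vecMulVec x u + b • vecMulVec y v + c • 1) = c ^ (Fintype.card m - 2) *
      ((c + a * (u ⬝ᵥ x)) * (c + b * (v ⬝ᵥ y)) - a * b * (u ⬝ᵥ y) * (v ⬝ᵥ x)) := by
  rw [add_comm, smul_vecMulVec_add_smul_vecMulVec,
    det_smul_one_add_mul_of_card_le _ _ _ (by simpa using hm), Fintype.card_fin,
    of_mul_transpose_of_fin_two, det_fin_two]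
  simp only [add_apply, smul_apply, one_apply_eq, one_apply_ne zero_ne_one,
    one_apply_ne one_ne_zero, of_apply, cons_val', cons_val_zero, cons_val_one, empty_val',
    cons_val_fin_one, smul_eq_mul]
  ring

theorem sum_starRingEnd_mul_eq_star_dotProduct [Fintype m] [StarRing R] (x y : m → R) :
    ∑ i, starRingEnd R (x i) * y i = star x ⬝ᵥ y := rfl

end Matrix

theorem sub_one_div_sq {K : Type*} [DivisionRing K] (k : K) :
    (k - 1) / k ^ 2 = 1 / k - 1 / k ^ 2 := by
  rw [sub_div, sq, div_self_mul_self', ← one_div]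

namespace Complex

variable {m : Type*} [Fintype m]

theorem sum_sq_norm_eq_star_dotProduct_self (x : m → ℂ) :
    ∑ i, (‖x i‖ : ℂ) ^ 2 = star x ⬝ᵥ x := by
  simp [dotProduct, RCLike.conj_mul]

theorem sq_norm_star_dotProduct (x y : m → ℂ) :
    (‖star y ⬝ᵥ x‖ : ℂ) ^ 2 = (star x ⬝ᵥ y) * (star y ⬝ᵥ x) := by
  rw [← conj_mul', star_dotProduct x y, star_def]

end Complex

theorem det_R1_exact_expansion_general
    (M : ℕ) (hM : 2 ≤ M) (h₁ h₂ : Fin M → ℂ) (σs2 σn2 : ℝ) (k : ℝ) :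
    ((((1 - 1/k) * σs2 : ℝ) : ℂ) • Matrix.vecMulVec h₁ (star h₁)
        + (((1/k) * σs2 : ℝ) : ℂ) • Matrix.vecMulVec (h₁ + h₂) (star (h₁ + h₂))
        + ((σn2 : ℝ) : ℂ) • (1 : Matrix (Fin M) (Fin M) ℂ)).det
      = ((σn2 : ℝ) : ℂ) ^ (M - 2) *
        ( ((σs2 * (∑ i, ‖h₁ i‖ ^ 2) + σn2 : ℝ) : ℂ)
            * (((1/k - 1/k^2) * σs2 * (∑ i, ‖h₂ i‖ ^ 2) + σn2 : ℝ) : ℂ)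
          + (((1/k^2) * σs2 * σn2 * (∑ i, ‖h₂ i‖ ^ 2) : ℝ) : ℂ)
          + (((1/k) * σs2 * σn2 : ℝ) : ℂ)
              * ((∑ i, (starRingEnd ℂ) (h₁ i) * h₂ i) + (∑ i, (starRingEnd ℂ) (h₂ i) * h₁ i))
          - ((((k - 1)/k^2) * σs2 ^ 2 * ‖∑ i, (starRingEnd ℂ) (h₂ i) * h₁ i‖ ^ 2 : ℝ) : ℂ) ) := by
  rw [det_smul_vecMulVec_add_smul_vecMulVec_add_smul_one _ _ _ _ _ _ _ (by simpa using hM),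
    Fintype.card_fin, sub_one_div_sq]
  simp only [sum_starRingEnd_mul_eq_star_dotProduct]
  push_cast
  rw [sum_sq_norm_eq_star_dotProduct_self, sum_sq_norm_eq_star_dotProduct_self,
    sq_norm_star_dotProduct]
  simp only [star_add, add_dotProduct, dotProduct_add]
  ring

/-- Exact determinant expansion (Eq. (22)/(48)) of the covariance matrix
`R₁ = (1 − 1/k)σ_s² h₁h₁ᴴ + (1/k)σ_s² (h₁+h₂)(h₁+h₂)ᴴ + σ_n² I_M` under hypothesis H₁. -/
theorem det_R1_exact_expansion
    (M : ℕ) (hM : 2 ≤ M) (h₁ h₂ : Fin M → ℂ) (σs2 σn2 : ℝ)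
    (hσs2 : 0 < σs2) (hσn2 : 0 < σn2) (k : ℝ) (hk : 1 ≤ k) :
    ((((1 - 1/k) * σs2 : ℝ) : ℂ) • Matrix.vecMulVec h₁ (star h₁)
        + (((1/k) * σs2 : ℝ) : ℂ) • Matrix.vecMulVec (h₁ + h₂) (star (h₁ + h₂))
        + ((σn2 : ℝ) : ℂ) • (1 : Matrix (Fin M) (Fin M) ℂ)).det
      = ((σn2 : ℝ) : ℂ) ^ (M - 2) *
        ( ((σs2 * (∑ i, ‖h₁ i‖ ^ 2) + σn2 : ℝ) : ℂ)
            * (((1/k - 1/k^2) * σs2 * (∑ i, ‖h₂ i‖ ^ 2) + σn2 : ℝ) : ℂ)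
          + (((1/k^2) * σs2 * σn2 * (∑ i, ‖h₂ i‖ ^ 2) : ℝ) : ℂ)
          + (((1/k) * σs2 * σn2 : ℝ) : ℂ)
              * ((∑ i, (starRingEnd ℂ) (h₁ i) * h₂ i) + (∑ i, (starRingEnd ℂ) (h₂ i) * h₁ i))
          - ((((k - 1)/k^2) * σs2 ^ 2 * ‖∑ i, (starRingEnd ℂ) (h₂ i) * h₁ i‖ ^ 2 : ℝ) : ℂ) ) :=
  det_R1_exact_expansion_general M hM h₁ h₂ σs2 σn2 k
end

section
/- Let M ≥ 2, h₁, h₂ ∈ ℂ^M, let σ_s², σ_n² > 0 be real, and let k ≥ 1 be real. Define R₁ = (1 − 1/k)·σ_s²·h₁·h₁ᴴ + (1/k)·σ_s²·(h₁+h₂)·(h₁+h₂)ᴴ + σ_n²·I_M, and define P₁ = (σ_s²‖h₁‖² + σ_n²)·((1/k − 1/k²)·σ_s²‖h₂‖² + σ_n²)·(σ_n²)^(M−2). Then |det(R₁) − P₁| ≤ (σ_n²)^(M−2)·[ (1/k²)·σ_s²·σ_n²·‖h₂‖² + (2/k)·σ_s²·σ_n²·‖h₁‖·‖h₂‖ +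 ((k−1)/k²)·σ_s⁴·‖h₁‖²·‖h₂‖² ]. -/
/-!
`R₁` is `σ_n² I` plus a Hermitian perturbation of rank two, so the Weinstein–Aronszajn identity
`det (c • 1 + X * Y) = c ^ (M - 2) * det (c • 1 + Y * X)` (with `X` of size `M × 2`) reduces
`det R₁` to a `2 × 2` determinant in `‖h₁‖²`, `‖h₁ + h₂‖²` and `⟪h₁, h₁ + h₂⟫`. Expanding these
in `‖h₂‖²` and `p = ⟪h₁, h₂⟫` gives
`det R₁ - P₁ = (σ_n²)^(M-2) (σ_s² σ_n² ‖h₂‖² / k² + 2 σ_s² σ_n² Re p / k - (k - 1) σ_s⁴ |p|² / k²)`,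
and each term is bounded by Cauchy–Schwarz, `|Re p| ≤ |p| ≤ ‖h₁‖ ‖h₂‖`.
-/

open Matrix
open scoped InnerProductSpace

namespace Matrix

variable {K : Type*} [Field K] {m n : Type*} [Fintype m] [Fintype n] [DecidableEq m]
  [DecidableEq n]

theorem det_mul_add_smul_one_comm {c : K} (hc : c ≠ 0) (X : Matrix n m K) (Y : Matrix m n K)
    (hmn : Fintype.card m ≤ Fintype.card n) :
    det (X * Y + c • 1) = c ^ (Fintype.card n - Fintype.card m) * det (Y * X + c • 1) := by
  have hXY : X * Y + c • 1 = c • (X * (c⁻¹ • Y) + 1) := by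
    rw [smul_add, Matrix.mul_smul, smul_smul, mul_inv_cancel₀ hc, one_smul]
  have hYX : c⁻¹ • Y * X + 1 = c⁻¹ • (Y * X + c • 1) := by
    rw [smul_add, Matrix.smul_mul, smul_smul, inv_mul_cancel₀ hc, one_smul]
  rw [hXY, det_smul, det_mul_add_one_comm, hYX, det_smul, ← mul_assoc, ← Nat.sub_add_cancel hmn,
    pow_add, Nat.add_sub_cancel, mul_assoc (c ^ _), ← mul_pow, mul_inv_cancel₀ hc, one_pow,
    mul_one]

theorem det_vecMulVec_add_vecMulVec_add_smul_one {c : K} (hc : c ≠ 0) (x₁ y₁ x₂ y₂ : n → K)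
    (hn : 2 ≤ Fintype.card n) :
    det (vecMulVec x₁ y₁ + vecMulVec x₂ y₂ + c • 1) =
      c ^ (Fintype.card n - 2) * ((y₁ ⬝ᵥ x₁ + c) * (y₂ ⬝ᵥ x₂ + c) - (y₁ ⬝ᵥ x₂) * (y₂ ⬝ᵥ x₁)) := by
  have hXY : vecMulVec x₁ y₁ + vecMulVec x₂ y₂ = (of ![x₁, x₂])ᵀ * of ![y₁, y₂] := by
    ext i j
    simp [mul_apply, Fin.sum_univ_two, vecMulVec_apply]
  rw [hXY, det_mul_add_smul_one_comm hc _ _ (by simpa using hn), Fintype.card_fin, det_fin_two]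
  simp only [add_apply, smul_apply, mul_apply, of_apply, transpose_apply, cons_val_zero,
    cons_val_one, one_apply_eq, one_apply_ne zero_ne_one, one_apply_ne one_ne_zero, smul_eq_mul,
    mul_one, mul_zero, add_zero, dotProduct]

theorem det_smul_vecMulVec_star_add_smul_vecMulVec_star_add_smul_one {𝕜 : Type*} [RCLike 𝕜]
    (hn : 2 ≤ Fintype.card n) (x y : n → 𝕜) (a b : ℝ) {c : ℝ} (hc : c ≠ 0) :
    det ((a : 𝕜) • vecMulVec x (star x) + (b : 𝕜) • vecMulVec y (star y) + (c : 𝕜) • 1) =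
      ((c ^ (Fintype.card n - 2) *
        ((a * ‖WithLp.toLp 2 x‖ ^ 2 + c) * (b * ‖WithLp.toLp 2 y‖ ^ 2 + c)
          - a * b * ‖⟪WithLp.toLp 2 x, WithLp.toLp 2 y⟫_𝕜‖ ^ 2) : ℝ) : 𝕜) := by
  have hdot (u v : n → 𝕜) : star u ⬝ᵥ v = ⟪WithLp.toLp 2 u, WithLp.toLp 2 v⟫_𝕜 :=
    ((EuclideanSpace.inner_toLp_toLp u v).trans (dotProduct_comm _ _)).symm
  rw [← vecMulVec_smul, ← vecMulVec_smul,
    det_vecMulVec_add_vecMulVec_add_smul_one (RCLike.ofReal_ne_zero.mpr hc) _ _ _ _ hn]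
  simp only [smul_dotProduct, hdot, inner_self_eq_norm_sq_to_K,
    ← inner_conj_symm (WithLp.toLp 2 y), smul_eq_mul]
  push_cast
  rw [← RCLike.mul_conj]
  ring

end Matrix

section InnerProductSpace

variable {𝕜 E : Type*} [RCLike 𝕜] [NormedAddCommGroup E] [InnerProductSpace 𝕜 E]

theorem norm_inner_self_add_sq (x y : E) :
    ‖⟪x, x + y⟫_𝕜‖ ^ 2 = ‖x‖ ^ 4 + 2 * ‖x‖ ^ 2 * RCLike.re ⟪x, y⟫_𝕜 + ‖⟪x, y⟫_𝕜‖ ^ 2 := by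
  rw [inner_add_right, inner_self_eq_norm_sq_to_K, ← RCLike.ofReal_pow, RCLike.norm_sq_eq_def,
    RCLike.norm_sq_eq_def]
  simp only [map_add, RCLike.ofReal_re, RCLike.ofReal_im]
  ring

/-- The left-hand side is `(det R₁ - P₁) / (σ_n²)^(M-2)` with `x = h₁`, `y = h₂`, `σs = σ_s²`,
`σn = σ_n²`. -/
theorem abs_sub_dominant_term_le (x y : E) {σs σn k : ℝ} (hσs : 0 ≤ σs) (hσn : 0 ≤ σn)
    (hk : 1 ≤ k) :
    |((1 - 1/k) * σs * ‖x‖ ^ 2 + σn) * ((1/k) * σs * ‖x + y‖ ^ 2 + σn)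
        - (1 - 1/k) * σs * ((1/k) * σs) * ‖⟪x, x + y⟫_𝕜‖ ^ 2
        - (σs * ‖x‖ ^ 2 + σn) * ((1/k - 1/k^2) * σs * ‖y‖ ^ 2 + σn)|
      ≤ (1/k^2) * σs * σn * ‖y‖ ^ 2 + (2/k) * σs * σn * ‖x‖ * ‖y‖
        + ((k - 1)/k^2) * σs ^ 2 * ‖x‖ ^ 2 * ‖y‖ ^ 2 := by
  set p := ⟪x, y⟫_𝕜
  have hk0 : k ≠ 0 := by positivity
  have hdiff : ((1 - 1/k) * σs * ‖x‖ ^ 2 + σn) * ((1/k) * σs * ‖x + y‖ ^ 2 + σn)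
        - (1 - 1/k) * σs * ((1/k) * σs) * ‖⟪x, x + y⟫_𝕜‖ ^ 2
        - (σs * ‖x‖ ^ 2 + σn) * ((1/k - 1/k^2) * σs * ‖y‖ ^ 2 + σn)
      = (1/k^2) * σs * σn * ‖y‖ ^ 2 + (2/k) * σs * σn * RCLike.re p
        - ((k - 1)/k^2) * σs ^ 2 * ‖p‖ ^ 2 := by
    rw [norm_add_sq (𝕜 := 𝕜), norm_inner_self_add_sq]
    field_simp
    ring
  have hCS : ‖p‖ ≤ ‖x‖ * ‖y‖ := norm_inner_le_norm x y
  have hk1 : 0 ≤ (k - 1) / k ^ 2 := by have := sub_nonneg.mpr hk; positivity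
  have hlin : |(2/k) * σs * σn * RCLike.re p| ≤ (2/k) * σs * σn * (‖x‖ * ‖y‖) := by
    rw [abs_mul, abs_of_nonneg (by positivity)]
    gcongr
    exact (RCLike.abs_re_le_norm p).trans hCS
  have hquad : ((k - 1)/k^2) * σs ^ 2 * ‖p‖ ^ 2 ≤ ((k - 1)/k^2) * σs ^ 2 * (‖x‖ * ‖y‖) ^ 2 := by
    gcongr
  have hquad_nonneg : 0 ≤ ((k - 1)/k^2) * σs ^ 2 * ‖p‖ ^ 2 := by positivity
  have hconst_nonneg : 0 ≤ (1/k^2) * σs * σn * ‖y‖ ^ 2 := by positivity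
  rw [hdiff, abs_le]
  constructor <;> linarith [abs_le.mp hlin]

end InnerProductSpace

/-- Quantitative form of Theorem 1: the determinant of
`R₁ = (1 − 1/k)σ_s² h₁h₁ᴴ + (1/k)σ_s² (h₁+h₂)(h₁+h₂)ᴴ + σ_n² I_M` differs from the
dominant term `P₁ = (σ_s²‖h₁‖² + σ_n²)((1/k − 1/k²)σ_s²‖h₂‖² + σ_n²)(σ_n²)^(M−2)` by at most
`(σ_n²)^(M−2)·[(1/k²)σ_s²σ_n²‖h₂‖² + (2/k)σ_s²σ_n²‖h₁‖‖h₂‖ + ((k−1)/k²)σ_s⁴‖h₁‖²‖h₂‖²]`. -/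
theorem det_R1_dominant_term_bound
    (M : ℕ) (hM : 2 ≤ M) (h₁ h₂ : Fin M → ℂ) (σs2 σn2 : ℝ)
    (hσs2 : 0 < σs2) (hσn2 : 0 < σn2) (k : ℝ) (hk : 1 ≤ k) :
    ‖(((((1 - 1/k) * σs2 : ℝ) : ℂ) • Matrix.vecMulVec h₁ (star h₁)
            + (((1/k) * σs2 : ℝ) : ℂ) • Matrix.vecMulVec (h₁ + h₂) (star (h₁ + h₂))
            + ((σn2 : ℝ) : ℂ) • (1 : Matrix (Fin M) (Fin M) ℂ)).det
          - (((σs2 * (∑ i, ‖h₁ i‖ ^ 2) + σn2)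
              * ((1/k - 1/k^2) * σs2 * (∑ i, ‖h₂ i‖ ^ 2) + σn2)
              * σn2 ^ (M - 2) : ℝ) : ℂ))‖
      ≤ σn2 ^ (M - 2) *
          ( (1/k^2) * σs2 * σn2 * (∑ i, ‖h₂ i‖ ^ 2)
            + (2/k) * σs2 * σn2 * Real.sqrt (∑ i, ‖h₁ i‖ ^ 2) * Real.sqrt (∑ i, ‖h₂ i‖ ^ 2)
            + ((k - 1)/k^2) * σs2 ^ 2 * (∑ i, ‖h₁ i‖ ^ 2) * (∑ i, ‖h₂ i‖ ^ 2) ) := by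
  have hs : ∑ i, ‖h₁ i‖ ^ 2 = ‖WithLp.toLp 2 h₁‖ ^ 2 := (EuclideanSpace.norm_sq_eq _).symm
  have ht : ∑ i, ‖h₂ i‖ ^ 2 = ‖WithLp.toLp 2 h₂‖ ^ 2 := (EuclideanSpace.norm_sq_eq _).symm
  rw [← RCLike.ofReal_eq_complex_ofReal,
    det_smul_vecMulVec_star_add_smul_vecMulVec_star_add_smul_one (by simpa using hM) _ _ _ _
      hσn2.ne',
    WithLp.toLp_add, hs, ht, Real.sqrt_sq (norm_nonneg _), Real.sqrt_sq (norm_nonneg _),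
    ← RCLike.ofReal_sub, RCLike.norm_ofReal, Fintype.card_fin, ← mul_comm (σn2 ^ _), ← mul_sub,
    abs_mul, abs_of_pos (by positivity)]
  gcongr
  exact abs_sub_dominant_term_le _ _ hσs2.le hσn2.le hk
end
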